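/- arXiv:cs/9909005 — 6 statements merged into one kernel-verified Lean document; each statement's English description precedes it below -/
import Mathlib

section
/- Let P and Q be finite sets of segments in ℝ² with unions UP and UQ, and suppose UQ is nonempty. If C(X,r) is a locally largest circle separating P (inside) from Q (outside), then r = infDist(X, UQ), i.e. the circle touches Q: the distance from X to the (closed) set UQ equals r. (Indeed, if r < infDist(X, UQ), then the circle C(X, infDist(X, UQ)) with the same center also separates P from Q and has strictly larger radius, contradicting local maximality.) -/
noncomputable section

/-- The Euclidean plane. -/
abbrev Plane := EuclideanSpace ℝ (Fin 2)

/-- The union of a finite set of segments (each given by its pair of endpoints). -/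
def segUnion (P : Finset (Plane × Plane)) : Set Plane :=
  ⋃ s ∈ P, segment ℝ s.1 s.2

/-- The circle of center `X` and radius `r` separates `A` (inside) from `B` (outside). -/
def Separates (X : Plane) (r : ℝ) (A B : Set Plane) : Prop :=
  A ⊆ Metric.closedBall X r ∧ B ∩ Metric.ball X r = ∅

/-- `C(X,r)` is a locally largest circle separating `A` (inside) from `B` (outside). -/
def LocallyLargestSeparating (X : Plane) (r : ℝ) (A B : Set Plane) : Prop :=
  Separates X r A B ∧
    ∃ ε > 0, ∀ X' : Plane, ∀ r' : ℝ, dist X X' < ε → r < r' → ¬ Separates X' r' A B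

open Metric Set

/- A separating circle keeps separating when its radius grows up to the distance from its centre
to the outer set, since the open ball of that radius misses the set. So a locally largest one,
which cannot be enlarged even about the same centre, already has that radius. -/

namespace Separates

variable {X : Plane} {r : ℝ} {A B : Set Plane}

lemma le_dist (h : Separates X r A B) {q : Plane} (hq : q ∈ B) : r ≤ dist X q :=
  not_lt.1 fun hlt => eq_empty_iff_forall_notMem.1 h.2 q ⟨hq, mem_ball'.2 hlt⟩

lemma le_infDist (h : Separates X r A B) (hB : B.Nonempty) : r ≤ infDist X B :=
  (Metric.le_infDist hB).2 fun _ hq => h.le_dist hq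

lemma with_infDist_radius (h : Separates X r A B) (hr : r ≤ infDist X B) :
    Separates X (infDist X B) A B :=
  ⟨h.1.trans (closedBall_subset_closedBall hr), disjoint_ball_infDist.symm.inter_eq⟩

end Separates

lemma LocallyLargestSeparating.not_separates_of_lt {X : Plane} {r r' : ℝ} {A B : Set Plane}
    (h : LocallyLargestSeparating X r A B) (hr : r < r') : ¬ Separates X r' A B := by
  obtain ⟨-, ε, hε, hloc⟩ := h
  exact hloc X r' (by rwa [dist_self]) hr

theorem locally_largest_touches_outer_set_general
    (UP UQ : Set Plane)
    (hQ : UQ.Nonempty)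
    (X : Plane) (r : ℝ)
    (hmax : LocallyLargestSeparating X r UP UQ) :
    r = Metric.infDist X UQ :=
  (hmax.1.le_infDist hQ).eq_of_not_lt fun hlt =>
    hmax.not_separates_of_lt hlt (hmax.1.with_infDist_radius hlt.le)

/-- A locally largest circle separating `P` (inside) from `Q` (outside) touches `Q`:
its radius equals the distance from its center to the union of `Q`. -/
theorem locally_largest_touches_outer_set
    (P Q : Finset (Plane × Plane)) (UP UQ : Set Plane)
    (hUP : UP = segUnion P) (hUQ : UQ = segUnion Q) (hQ : UQ.Nonempty)
    (X : Plane) (r : ℝ)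
    (hmax : LocallyLargestSeparating X r UP UQ) :
    r = Metric.infDist X UQ :=
  locally_largest_touches_outer_set_general UP UQ hQ X r hmax
end
end

section
/- Let S be a finite nonempty subset of ℝ² and let ℓ be a line (one-dimensional affine subspace) of ℝ² × ℝ. If ℓ contains a point (x₀,r₀) with r₀ > f_S(x₀) (i.e. ℓ meets the open region strictly above the upper envelope), then ℓ intersects the upper envelope UE(S) = {(x, f_S(x)) : x ∈ ℝ²} in at most two points. -/
/-
The function `G (x, r) = f_S x - r` is convex on `ℝ² × ℝ`, being a maximum of distance functions
minus a linear form, and `UE(S)` is its zero set. Restricted to the line, `G` becomes a convex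
function of one real variable that is negative at the parameter of `(x₀, r₀)`. Such a function
vanishes at most twice: if it vanished at `a < b < c`, convexity would force it to be `≥ 0` both
to the left of `b` (from `b < c`) and to the right of `b` (from `a < b`).
-/

noncomputable section

open Set

theorem ConvexOn.finset_sup' {𝕜 E β ι : Type*} [Semiring 𝕜] [PartialOrder 𝕜]
    [AddCommMonoid E] [SMul 𝕜 E] [AddCommMonoid β] [LinearOrder β] [IsOrderedAddMonoid β]
    [Module 𝕜 β] [PosSMulStrictMono 𝕜 β] {s : Set E} {t : Finset ι} (H : t.Nonempty)
    {f : ι → E → β} (hf : ∀ i ∈ t, ConvexOn 𝕜 s (f i)) : ConvexOn 𝕜 s (t.sup' H f) :=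
  Finset.sup'_induction H f (fun _ h₁ _ h₂ => h₁.sup h₂) hf

theorem convexOn_finset_sup'_dist {E : Type*} [SeminormedAddCommGroup E] [NormedSpace ℝ E]
    (S : Finset E) (hS : S.Nonempty) :
    ConvexOn ℝ univ (fun x => S.sup' hS (fun q => dist x q)) := by
  have hsup : (fun x => S.sup' hS (fun q => dist x q)) = S.sup' hS (fun q x => dist x q) :=
    funext fun x => (Finset.sup'_apply hS (fun q x => dist x q) x).symm
  exact hsup ▸ ConvexOn.finset_sup' hS fun q _ => convexOn_dist q convex_univ

theorem Set.exists_subset_pair_of_forall_not_lt_lt {α : Type*} [LinearOrder α] [Nonempty α]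
    {s : Set α} (h : ∀ a ∈ s, ∀ b ∈ s, ∀ c ∈ s, a < b → b < c → False) :
    ∃ a b, s ⊆ {a, b} := by
  by_contra! H
  obtain ⟨a, ha, -⟩ := not_subset.1 (H (Classical.arbitrary α) (Classical.arbitrary α))
  obtain ⟨b, hb, hba⟩ := not_subset.1 (H a a)
  obtain ⟨c, hc, hcab⟩ := not_subset.1 (H a b)
  simp only [mem_insert_iff, mem_singleton_iff, not_or] at hba hcab
  rcases lt_or_gt_of_ne hba.1 with hab | hab <;> rcases lt_or_gt_of_ne hcab.1 with hac | hac <;>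
    rcases lt_or_gt_of_ne hcab.2 with hbc | hbc <;> grind

section LevelSet

variable {𝕜 E β : Type*} [Field 𝕜] [LinearOrder 𝕜] [IsStrictOrderedRing 𝕜]
  [AddCommGroup β] [LinearOrder β] [IsOrderedAddMonoid β] [Module 𝕜 β] [PosSMulStrictMono 𝕜 β]

theorem ConvexOn.exists_preimage_singleton_subset_pair {f : 𝕜 → β} (hf : ConvexOn 𝕜 univ f)
    {t₀ : 𝕜} {c : β} (h : f t₀ < c) : ∃ a b, f ⁻¹' {c} ⊆ {a, b} := by
  refine exists_subset_pair_of_forall_not_lt_lt fun a ha b hb d hd hab hbd => ?_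
  simp only [mem_preimage, mem_singleton_iff] at ha hb hd
  rcases le_total t₀ b with ht | ht
  · exact (hf.le_left_of_right_le'' trivial trivial ht hbd (hd.trans hb.symm).le).not_gt (hb ▸ h)
  · exact (hf.le_right_of_left_le'' trivial trivial hab ht (ha.trans hb.symm).le).not_gt (hb ▸ h)

theorem ConvexOn.exists_line_inter_preimage_singleton_subset_pair [AddCommGroup E] [Module 𝕜 E]
    {G : E → β} (hG : ConvexOn 𝕜 univ G) (p v : E) {t₀ : 𝕜} {c : β} (h : G (p + t₀ • v) < c) :
    ∃ u w, {q | ∃ t : 𝕜, q = p + t • v} ∩ G ⁻¹' {c} ⊆ {u, w} := by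
  set φ : 𝕜 →ᵃ[𝕜] E := AffineMap.lineMap p (p + v)
  have hφ (t : 𝕜) : φ t = p + t • v := by
    simp [φ, AffineMap.lineMap_apply_module', add_comm]
  obtain ⟨a, b, hab⟩ := (hG.comp_affineMap φ).exists_preimage_singleton_subset_pair
    (t₀ := t₀) (by simpa [hφ] using h)
  refine ⟨φ a, φ b, ?_⟩
  rintro q ⟨⟨t, rfl⟩, hq⟩
  rcases hab (show t ∈ (G ∘ φ) ⁻¹' {c} by simpa [hφ] using hq) with rfl | rfl <;> simp [hφ]

end LevelSet

theorem line_inter_upper_envelope_at_most_two_general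
    (S : Finset Plane) (hS : S.Nonempty)
    (p v : Plane × ℝ)
    (L : Set (Plane × ℝ)) (hL : L = {q : Plane × ℝ | ∃ t : ℝ, q = p + t • v})
    (x₀ : Plane) (r₀ : ℝ) (h₀ : (x₀, r₀) ∈ L)
    (habove : S.sup' hS (fun q => dist x₀ q) < r₀) :
    ∃ u w : Plane × ℝ,
      L ∩ {xr : Plane × ℝ | xr.2 = S.sup' hS (fun q => dist xr.1 q)} ⊆ {u, w} := by
  set G : Plane × ℝ → ℝ := fun xr => S.sup' hS (fun q => dist xr.1 q) - xr.2
  have hG : ConvexOn ℝ univ G :=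
    ((convexOn_finset_sup'_dist S hS).comp_linearMap (LinearMap.fst ℝ Plane ℝ)).sub
      ((LinearMap.snd ℝ Plane ℝ).concaveOn convex_univ)
  subst hL
  obtain ⟨t₀, ht₀⟩ := h₀
  obtain ⟨u, w, huw⟩ := hG.exists_line_inter_preimage_singleton_subset_pair p v (t₀ := t₀)
    (c := 0) (by simpa [G, ← ht₀] using habove)
  exact ⟨u, w, fun q ⟨hqL, hq⟩ => huw ⟨hqL, sub_eq_zero.2 hq.symm⟩⟩

/-- A line of the space of circles `ℝ² × ℝ` that meets the open region strictly above
the upper envelope `UE(S)` (the graph of `f_S(x) = max_{p ∈ S} dist x p`) intersects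
`UE(S)` in at most two points. -/
theorem line_inter_upper_envelope_at_most_two
    (S : Finset Plane) (hS : S.Nonempty)
    (p v : Plane × ℝ) (hv : v ≠ 0)
    (L : Set (Plane × ℝ)) (hL : L = {q : Plane × ℝ | ∃ t : ℝ, q = p + t • v})
    (x₀ : Plane) (r₀ : ℝ) (h₀ : (x₀, r₀) ∈ L)
    (habove : S.sup' hS (fun q => dist x₀ q) < r₀) :
    ∃ u w : Plane × ℝ,
      L ∩ {xr : Plane × ℝ | xr.2 = S.sup' hS (fun q => dist xr.1 q)} ⊆ {u, w} :=
  line_inter_upper_envelope_at_most_two_general S hS p v L hL x₀ r₀ h₀ habove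
end
end

section
/- Let s₁ ≠ s₂ be two distinct points of ℝ² and let l be a line (one-dimensional affine subspace) of ℝ². Then there are at most two pairs (x,r) ∈ ℝ² × ℝ with r ≥ 0 such that dist(x,s₁) = r, dist(x,s₂) = r and infDist(x,l) = r. In other words, at most two circles pass through two given distinct points and are tangent to a given line. -/
noncomputable section

/-- A real quadratic with a nonzero coefficient has at most two roots. -/
lemma roots_quad (A B C : ℝ) (h : ¬(A = 0 ∧ B = 0 ∧ C = 0)) :
    ∃ t₁ t₂ : ℝ, ∀ t, A*t^2 + B*t + C = 0 → t = t₁ ∨ t = t₂ := by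
  rcases eq_or_ne A 0 with hA | hA
  · rcases eq_or_ne B 0 with hB | hB
    · have hC : C ≠ 0 := by intro hC; exact h ⟨hA, hB, hC⟩
      exact ⟨0, 0, fun t ht => absurd (by rw [hA, hB] at ht; linarith) hC⟩
    · refine ⟨-C/B, -C/B, fun t ht => Or.inl ?_⟩
      rw [hA] at ht
      field_simp
      linarith
  · rcases le_or_gt 0 (discrim A B C) with hd | hd
    · have hs : discrim A B C = Real.sqrt (discrim A B C) * Real.sqrt (discrim A B C) :=
        (Real.mul_self_sqrt hd).symm
      refine ⟨(-B + Real.sqrt (discrim A B C))/(2*A), (-B - Real.sqrt (discrim A B C))/(2*A),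
        fun t ht => ?_⟩
      exact (quadratic_eq_zero_iff hA hs t).1 (by linear_combination ht)
    · refine ⟨0, 0, fun t ht => absurd ?_ (quadratic_ne_zero_of_discrim_ne_sq
        (fun s => by nlinarith [sq_nonneg s]) t)⟩
      linear_combination ht

/-- The key algebraic fact: the center of a circle through two given distinct points and
tangent to a given line corresponds to one of at most two parameters on the perpendicular
bisector of the two points. -/
lemma core (a0 a1 b0 b1 p0 p1 v0 v1 : ℝ)
    (hs : ¬ (b0 - a0 = 0 ∧ b1 - a1 = 0)) (hv : ¬ (v0 = 0 ∧ v1 = 0)) :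
    ∃ t₁ t₂ : ℝ, ∀ x0 x1 r : ℝ,
      (x0-a0)^2+(x1-a1)^2 = r^2 → (x0-b0)^2+(x1-b1)^2 = r^2 →
      r^2*(v0^2+v1^2) = ((x0-p0)*(-v1)+(x1-p1)*v0)^2 →
      (x0 = (a0+b0)/2 + t₁ * (-(b1-a1)) ∧ x1 = (a1+b1)/2 + t₁*(b0-a0)) ∨
      (x0 = (a0+b0)/2 + t₂ * (-(b1-a1)) ∧ x1 = (a1+b1)/2 + t₂*(b0-a0)) := by
  have hE : 0 < (b0-a0)^2+(b1-a1)^2 := by rcases not_and_or.mp hs with h|h <;> positivity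
  have hV : 0 < v0^2+v1^2 := by rcases not_and_or.mp hv with h|h <;> positivity
  have hABC : ¬(((b0-a0)^2+(b1-a1)^2)*(v0^2+v1^2) - ((b1-a1)*v1+(b0-a0)*v0)^2 = 0 ∧
      -(2*((b1-a1)*v1+(b0-a0)*v0)*(-((a0+b0)/2-p0)*v1+((a1+b1)/2-p1)*v0)) = 0 ∧
      ((b0-a0)^2+(b1-a1)^2)*(v0^2+v1^2)/4 - (-((a0+b0)/2-p0)*v1+((a1+b1)/2-p1)*v0)^2 = 0) := by
    rintro ⟨h1, h2, h3⟩
    have hEV : 0 < ((b0-a0)^2+(b1-a1)^2)*(v0^2+v1^2) := mul_pos hE hV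
    have haa : (b1-a1)*v1+(b0-a0)*v0 ≠ 0 := by
      intro h
      rw [h] at h1
      nlinarith
    have hbb : -((a0+b0)/2-p0)*v1+((a1+b1)/2-p1)*v0 = 0 := by
      rcases mul_eq_zero.mp (by linarith :
          ((b1-a1)*v1+(b0-a0)*v0) * (-((a0+b0)/2-p0)*v1+((a1+b1)/2-p1)*v0) = 0) with h | h
      · exact absurd h haa
      · exact h
    rw [hbb] at h3
    nlinarith
  obtain ⟨t₁, t₂, hroots⟩ := roots_quad _ _ _ hABC
  refine ⟨t₁, t₂, fun x0 x1 r P1 P2 P3 => ?_⟩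
  have L : (x0-(a0+b0)/2)*(b0-a0) + (x1-(a1+b1)/2)*(b1-a1) = 0 := by
    linear_combination (P1 - P2)/2
  set t := ((x0-(a0+b0)/2)*(-(b1-a1)) + (x1-(a1+b1)/2)*(b0-a0))/((b0-a0)^2+(b1-a1)^2) with htd
  have hE' : (b0-a0)^2+(b1-a1)^2 ≠ 0 := ne_of_gt hE
  have hx0 : x0 = (a0+b0)/2 + t * (-(b1-a1)) := by
    have h2 : x0 - (a0+b0)/2 = ((x0-(a0+b0)/2)*(-(b1-a1)) + (x1-(a1+b1)/2)*(b0-a0)) * (-(b1-a1))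
        / ((b0-a0)^2+(b1-a1)^2) := by
      rw [eq_div_iff hE']
      linear_combination (b0-a0)*L
    rw [htd, div_mul_eq_mul_div]
    linarith [h2]
  have hx1 : x1 = (a1+b1)/2 + t*(b0-a0) := by
    have h2 : x1 - (a1+b1)/2 = ((x0-(a0+b0)/2)*(-(b1-a1)) + (x1-(a1+b1)/2)*(b0-a0)) * (b0-a0)
        / ((b0-a0)^2+(b1-a1)^2) := by
      rw [eq_div_iff hE']
      linear_combination (b1-a1)*L
    rw [htd, div_mul_eq_mul_div]
    linarith [h2]
  rw [hx0, hx1] at P1 P3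
  have hr2 : r^2 = t^2*((b0-a0)^2+(b1-a1)^2) + ((b0-a0)^2+(b1-a1)^2)/4 := by
    linear_combination -P1
  have hq : (((b0-a0)^2+(b1-a1)^2)*(v0^2+v1^2) - ((b1-a1)*v1+(b0-a0)*v0)^2)*t^2
      + (-(2*((b1-a1)*v1+(b0-a0)*v0)*(-((a0+b0)/2-p0)*v1+((a1+b1)/2-p1)*v0)))*t
      + (((b0-a0)^2+(b1-a1)^2)*(v0^2+v1^2)/4 - (-((a0+b0)/2-p0)*v1+((a1+b1)/2-p1)*v0)^2) = 0 := by
    linear_combination (-(v0^2+v1^2))*hr2 + P3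
  rcases hroots t hq with h | h
  · exact Or.inl ⟨h ▸ hx0, h ▸ hx1⟩
  · exact Or.inr ⟨h ▸ hx0, h ▸ hx1⟩

lemma dist_sq (x y : Plane) : dist x y ^ 2 = (x 0 - y 0)^2 + (x 1 - y 1)^2 := by
  rw [EuclideanSpace.dist_eq, Real.sq_sqrt (by positivity)]
  simp [Fin.sum_univ_two, Real.dist_eq, sq_abs]

/-- Distance from a point to a parametrized line, in coordinates. -/
lemma infDist_line (p v : Plane) (hv : ¬(v 0 = 0 ∧ v 1 = 0)) (x : Plane) :
    Metric.infDist x {y : Plane | ∃ t : ℝ, y = p + t • v}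
      = |(x 0 - p 0) * (-(v 1)) + (x 1 - p 1) * (v 0)| / Real.sqrt ((v 0)^2 + (v 1)^2) := by
  have hV : 0 < (v 0)^2 + (v 1)^2 := by
    rcases not_and_or.mp hv with h | h <;> positivity
  have hsV : 0 < Real.sqrt ((v 0)^2 + (v 1)^2) := Real.sqrt_pos.mpr hV
  have hcomp : ∀ (t : ℝ) (i : Fin 2), (p + t • v) i = p i + t * v i := by
    intro t i; simp
  have hd : ∀ t : ℝ, dist x (p + t • v) ^ 2
      = (x 0 - p 0 - t * v 0)^2 + (x 1 - p 1 - t * v 1)^2 := by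
    intro t
    rw [dist_sq, hcomp, hcomp]
    ring
  set c := (x 0 - p 0) * (-(v 1)) + (x 1 - p 1) * (v 0) with hc
  apply le_antisymm
  · set t0 := ((x 0 - p 0) * v 0 + (x 1 - p 1) * v 1) / ((v 0)^2 + (v 1)^2) with ht0
    have hmem : p + t0 • v ∈ {y : Plane | ∃ t : ℝ, y = p + t • v} := ⟨t0, rfl⟩
    refine le_trans (Metric.infDist_le_dist_of_mem hmem) ?_
    have h1 : dist x (p + t0 • v)
        = Real.sqrt ((x 0 - p 0 - t0 * v 0)^2 + (x 1 - p 1 - t0 * v 1)^2) := by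
      rw [← hd t0]
      exact (Real.sqrt_sq dist_nonneg).symm
    rw [h1]
    rw [show |c| / Real.sqrt ((v 0)^2 + (v 1)^2) = Real.sqrt (c^2 / ((v 0)^2 + (v 1)^2)) by
      rw [Real.sqrt_div (sq_nonneg c), Real.sqrt_sq_eq_abs]]
    apply Real.sqrt_le_sqrt
    apply le_of_eq
    rw [eq_div_iff (ne_of_gt hV), ht0, hc]
    field_simp
    ring
  · by_contra hcon
    push_neg at hcon
    obtain ⟨y, hy, hlt⟩ :=
      (Metric.infDist_lt_iff ⟨p + (0:ℝ) • v, Set.mem_setOf.mpr ⟨0, rfl⟩⟩).1 hcon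
    obtain ⟨t, rfl⟩ := hy
    refine absurd hlt (not_lt.mpr ?_)
    have h1 : dist x (p + t • v)
        = Real.sqrt ((x 0 - p 0 - t * v 0)^2 + (x 1 - p 1 - t * v 1)^2) := by
      rw [← hd t]; exact (Real.sqrt_sq dist_nonneg).symm
    rw [h1]
    rw [show |c| / Real.sqrt ((v 0)^2 + (v 1)^2) = Real.sqrt (c^2 / ((v 0)^2 + (v 1)^2)) by
      rw [Real.sqrt_div (sq_nonneg c), Real.sqrt_sq_eq_abs]]
    apply Real.sqrt_le_sqrt
    rw [div_le_iff₀ hV]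
    have hc2 : c^2 = ((x 0 - p 0) * (-(v 1)) + (x 1 - p 1) * (v 0))^2 := by rw [hc]
    nlinarith [sq_nonneg ((x 0 - p 0 - t * v 0) * v 0 + (x 1 - p 1 - t * v 1) * v 1), hc2]

/-- At most two circles pass through two given distinct points and are tangent to a given
line (a one-dimensional affine subspace of the plane). -/
theorem at_most_two_circles_through_two_points_tangent_line
    (s₁ s₂ : Plane) (hne : s₁ ≠ s₂)
    (p v : Plane) (hv : v ≠ 0)
    (l : Set Plane) (hl : l = {y : Plane | ∃ t : ℝ, y = p + t • v}) :
    ∃ u w : Plane × ℝ, ∀ (x : Plane) (r : ℝ), 0 ≤ r →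
      dist x s₁ = r → dist x s₂ = r → Metric.infDist x l = r →
      (x, r) = u ∨ (x, r) = w := by
  have hv' : ¬ (v 0 = 0 ∧ v 1 = 0) := by
    rintro ⟨h0, h1⟩
    apply hv
    ext i
    fin_cases i <;> simpa
  have hs' : ¬ (s₂ 0 - s₁ 0 = 0 ∧ s₂ 1 - s₁ 1 = 0) := by
    rintro ⟨h0, h1⟩
    apply hne
    ext i
    fin_cases i
    · exact (by linarith : s₁ 0 = s₂ 0)
    · exact (by linarith : s₁ 1 = s₂ 1)
  obtain ⟨t₁, t₂, hcore⟩ := core (s₁ 0) (s₁ 1) (s₂ 0) (s₂ 1) (p 0) (p 1) (v 0) (v 1) hs' hv'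
  have hV : 0 < (v 0)^2 + (v 1)^2 := by
    rcases not_and_or.mp hv' with h | h <;> positivity
  -- candidate centers
  let pt : ℝ → Plane := fun t => (WithLp.equiv 2 (Fin 2 → ℝ)).symm
    ![(s₁ 0 + s₂ 0)/2 + t * (-(s₂ 1 - s₁ 1)), (s₁ 1 + s₂ 1)/2 + t * (s₂ 0 - s₁ 0)]
  have hpt0 : ∀ t, pt t 0 = (s₁ 0 + s₂ 0)/2 + t * (-(s₂ 1 - s₁ 1)) := fun t => rfl
  have hpt1 : ∀ t, pt t 1 = (s₁ 1 + s₂ 1)/2 + t * (s₂ 0 - s₁ 0) := fun t => rfl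
  refine ⟨(pt t₁, Real.sqrt ((pt t₁ 0 - s₁ 0)^2 + (pt t₁ 1 - s₁ 1)^2)),
          (pt t₂, Real.sqrt ((pt t₂ 0 - s₁ 0)^2 + (pt t₂ 1 - s₁ 1)^2)), ?_⟩
  intro x r hr h1 h2 h3
  have P1 : (x 0 - s₁ 0)^2 + (x 1 - s₁ 1)^2 = r^2 := by
    rw [← dist_sq, h1]
  have P2 : (x 0 - s₂ 0)^2 + (x 1 - s₂ 1)^2 = r^2 := by
    rw [← dist_sq, h2]
  have P3 : r^2*((v 0)^2+(v 1)^2) = ((x 0 - p 0)*(-(v 1))+(x 1 - p 1)*(v 0))^2 := by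
    rw [hl, infDist_line p v hv' x] at h3
    have h4 : |(x 0 - p 0)*(-(v 1))+(x 1 - p 1)*(v 0)| = r * Real.sqrt ((v 0)^2+(v 1)^2) := by
      rw [← h3]
      field_simp
    have h5 : ((x 0 - p 0)*(-(v 1))+(x 1 - p 1)*(v 0))^2 = r^2 * ((v 0)^2+(v 1)^2) := by
      rw [← sq_abs, h4, mul_pow, Real.sq_sqrt hV.le]
    linarith
  have hfin : ∀ t : ℝ, x 0 = pt t 0 → x 1 = pt t 1 →
      (x, r) = (pt t, Real.sqrt ((pt t 0 - s₁ 0)^2 + (pt t 1 - s₁ 1)^2)) := by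
    intro t e0 e1
    have hx : x = pt t := by
      ext i
      fin_cases i
      · exact e0
      · exact e1
    have hrr : r = Real.sqrt ((pt t 0 - s₁ 0)^2 + (pt t 1 - s₁ 1)^2) := by
      rw [← e0, ← e1, P1, Real.sqrt_sq hr]
    rw [hx, hrr]
  rcases hcore (x 0) (x 1) r P1 P2 P3 with ⟨e0, e1⟩ | ⟨e0, e1⟩
  · exact Or.inl (hfin t₁ (by rw [hpt0]; exact e0) (by rw [hpt1]; exact e1))
  · exact Or.inr (hfin t₂ (by rw [hpt0]; exact e0) (by rw [hpt1]; exact e1))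
end
end

section
/- Let n₁, n₂ be unit vectors in ℝ² with n₁ ≠ n₂ and n₁ ≠ −n₂, let c₁, c₂ ∈ ℝ, set lᵢ = {y ∈ ℝ² : ⟨y,nᵢ⟩ = cᵢ} and Hᵢ = {y ∈ ℝ² : ⟨y,nᵢ⟩ ≥ cᵢ}, and let p ∈ ℝ². Then there are at most two pairs (x,r) ∈ ℝ² × ℝ with r ≥ 0, x ∈ H₁ ∩ H₂, infDist(x,l₁) = r, infDist(x,l₂) = r and dist(x,p) = r. In other words, at most two circles are tangent to two given non-parallel oriented lines (lying on the specified sides) and pass through a given point. -/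
noncomputable section
lemma inner_coords (x y : Plane) : (inner ℝ x y : ℝ) = x 0 * y 0 + x 1 * y 1 := by
  simp [PiLp.inner_apply, Fin.sum_univ_two, RCLike.inner_apply]
  ring

lemma normsq_coords (x : Plane) : ‖x‖ ^ 2 = x 0 * x 0 + x 1 * x 1 := by
  rw [← real_inner_self_eq_norm_sq, inner_coords]

def rot (m : Plane) : Plane := !₂[-(m 1), m 0]

lemma rot_normsq (m : Plane) : ‖rot m‖ ^ 2 = ‖m‖ ^ 2 := by
  rw [normsq_coords, normsq_coords]
  show -(m 1) * -(m 1) + m 0 * m 0 = _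
  ring

lemma rot_iden (m x : Plane) :
    (inner ℝ (rot m) x : ℝ) ^ 2 + (inner ℝ m x : ℝ) ^ 2 = ‖m‖ ^ 2 * ‖x‖ ^ 2 := by
  rw [inner_coords, inner_coords, normsq_coords, normsq_coords]
  show (-(m 1) * x 0 + m 0 * x 1) ^ 2 + _ = _
  ring

lemma decomp (m : Plane) (hm : m ≠ 0) (x : Plane) :
    x = ((inner ℝ x m : ℝ) / ‖m‖ ^ 2) • m + ((inner ℝ x (rot m) : ℝ) / ‖m‖ ^ 2) • rot m := by
  have hM' : m 0 * m 0 + m 1 * m 1 ≠ 0 := by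
    rw [← normsq_coords]
    exact pow_ne_zero 2 (norm_ne_zero_iff.mpr hm)
  ext i
  fin_cases i <;>
  · simp only [PiLp.add_apply, PiLp.smul_apply, smul_eq_mul, inner_coords, normsq_coords]
    show _ = _ / _ * _ + _ / _ * _
    simp only [rot, Fin.zero_eta, Fin.mk_one, Matrix.cons_val_zero, Matrix.cons_val_one, Matrix.head_cons]
    have h2 : m 0 ^ 2 + m 1 ^ 2 ≠ 0 := by rw [sq, sq]; exact hM'
    have h3 : m 1 ^ 2 + m 0 ^ 2 ≠ 0 := by rw [add_comm]; exact h2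
    field_simp
    ring

lemma infDist_hyperplane (n : Plane) (hn : ‖n‖ = 1) (c : ℝ) (x : Plane)
    (hx : c ≤ (inner ℝ x n : ℝ)) :
    Metric.infDist x {y : Plane | (inner ℝ y n : ℝ) = c} = (inner ℝ x n : ℝ) - c := by
  have hnn : (inner ℝ n n : ℝ) = 1 := by
    rw [real_inner_self_eq_norm_sq, hn]; norm_num
  apply le_antisymm
  · have hmem : x - ((inner ℝ x n : ℝ) - c) • n ∈ {y : Plane | (inner ℝ y n : ℝ) = c} := by
      simp only [Set.mem_setOf_eq, inner_sub_left, real_inner_smul_left, hnn]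
      ring
    have := Metric.infDist_le_dist_of_mem (x := x) hmem
    rwa [dist_eq_norm, sub_sub_cancel, norm_smul, hn, mul_one,
      Real.norm_eq_abs, abs_of_nonneg (by linarith)] at this
  · have hne : {y : Plane | (inner ℝ y n : ℝ) = c}.Nonempty := ⟨c • n, by
      simp only [Set.mem_setOf_eq, real_inner_smul_left, hnn]; ring⟩
    rw [Metric.infDist_eq_iInf]
    have : Nonempty {y : Plane | (inner ℝ y n : ℝ) = c} := hne.to_subtype
    refine le_ciInf fun ⟨y, hy⟩ => ?_
    have h1 : (inner ℝ (x - y) n : ℝ) = (inner ℝ x n : ℝ) - c := by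
      rw [inner_sub_left, hy]
    have h2 : (inner ℝ (x - y) n : ℝ) ≤ ‖x - y‖ * ‖n‖ := real_inner_le_norm _ _
    rw [dist_eq_norm]
    rw [hn, mul_one] at h2
    linarith [h1 ▸ h2]

/-- At most two circles are tangent to two given non-parallel oriented lines (with center on
the specified sides) and pass through a given point. -/
theorem at_most_two_circles_tangent_two_lines_through_point
    (n₁ n₂ : Plane) (hn₁ : ‖n₁‖ = 1) (hn₂ : ‖n₂‖ = 1)
    (hne : n₁ ≠ n₂) (hne' : n₁ ≠ -n₂) (c₁ c₂ : ℝ)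
    (l₁ l₂ H₁ H₂ : Set Plane)
    (hl₁ : l₁ = {y : Plane | (inner ℝ y n₁ : ℝ) = c₁})
    (hl₂ : l₂ = {y : Plane | (inner ℝ y n₂ : ℝ) = c₂})
    (hH₁ : H₁ = {y : Plane | c₁ ≤ (inner ℝ y n₁ : ℝ)})
    (hH₂ : H₂ = {y : Plane | c₂ ≤ (inner ℝ y n₂ : ℝ)})
    (p : Plane) :
    ∃ u w : Plane × ℝ, ∀ (x : Plane) (r : ℝ), 0 ≤ r → x ∈ H₁ ∩ H₂ →
      Metric.infDist x l₁ = r → Metric.infDist x l₂ = r → dist x p = r →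
      (x, r) = u ∨ (x, r) = w := by
  subst hl₁ hl₂ hH₁ hH₂
  set m : Plane := n₁ - n₂ with hmdef
  have hm0 : m ≠ 0 := sub_ne_zero.mpr hne
  set e : Plane := rot m with hedef
  have hM : (0:ℝ) < ‖m‖ ^ 2 := pow_pos (norm_pos_iff.mpr hm0) 2
  have hee : ‖e‖ ^ 2 = ‖m‖ ^ 2 := rot_normsq m
  -- inner n₂ n₁ < 1
  have h21 : (inner ℝ n₂ n₁ : ℝ) < 1 := by
    have hle : (inner ℝ n₂ n₁ : ℝ) ≤ 1 := by
      have := real_inner_le_norm n₂ n₁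
      rw [hn₂, hn₁, one_mul] at this; exact this
    rcases lt_or_eq_of_le hle with h | h
    · exact h
    · exact absurd ((inner_eq_one_iff_of_norm_eq_one hn₂ hn₁).mp h).symm hne
  have hn₁n₁ : (inner ℝ n₁ n₁ : ℝ) = 1 := by
    rw [real_inner_self_eq_norm_sq, hn₁]; norm_num
  have hmn1 : (0:ℝ) < (inner ℝ m n₁ : ℝ) := by
    rw [hmdef, inner_sub_left, hn₁n₁]
    have : (inner ℝ n₂ n₁ : ℝ) < 1 := h21
    linarith
  set β : ℝ := (inner ℝ e n₁ : ℝ) with hβdef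
  set A : ℝ := ‖m‖ ^ 2 - β ^ 2 with hAdef
  have hA : 0 < A := by
    have hid := rot_iden m n₁
    rw [hn₁] at hid
    have : A = (inner ℝ m n₁ : ℝ) ^ 2 := by
      rw [hAdef, hβdef, hedef]; nlinarith [hid]
    rw [this]; exact pow_pos hmn1 2
  set s₀ : ℝ := (c₁ - c₂) / ‖m‖ ^ 2 with hs₀def
  set x₀ : Plane := s₀ • m with hx₀def
  set α : ℝ := (inner ℝ x₀ n₁ : ℝ) - c₁ with hαdef
  set q : Plane := x₀ - p with hqdef
  set B : ℝ := 2 * (inner ℝ q e : ℝ) - 2 * α * β with hBdef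
  set C : ℝ := ‖q‖ ^ 2 - α ^ 2 with hCdef
  set s : ℝ := Real.sqrt (discrim A B C) with hsdef
  refine ⟨(x₀ + ((-B + s) / (2 * A)) • e, α + β * ((-B + s) / (2 * A))),
          (x₀ + ((-B - s) / (2 * A)) • e, α + β * ((-B - s) / (2 * A))), ?_⟩
  rintro x r hr ⟨hx1, hx2⟩ h1 h2 hp
  simp only [Set.mem_setOf_eq] at hx1 hx2
  rw [infDist_hyperplane n₁ hn₁ c₁ x hx1] at h1
  rw [infDist_hyperplane n₂ hn₂ c₂ x hx2] at h2
  have hxm : (inner ℝ x m : ℝ) = c₁ - c₂ := by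
    rw [hmdef, inner_sub_right]; linarith
  set t : ℝ := (inner ℝ x e : ℝ) / ‖m‖ ^ 2 with htdef
  have hxd : x = x₀ + t • e := by
    have hdec := decomp m hm0 x
    rw [hxm] at hdec
    rw [hx₀def, hs₀def, htdef, hedef]
    exact hdec
  have hrt : r = α + β * t := by
    have hx1' : (inner ℝ x n₁ : ℝ) = (inner ℝ x₀ n₁ : ℝ) + t * (inner ℝ e n₁ : ℝ) := by
      simp only [hxd, inner_add_left, real_inner_smul_left]
    rw [hαdef, hβdef]
    rw [hx1'] at h1
    linarith
  have hquad : A * (t * t) + B * t + C = 0 := by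
    have hxp : x - p = q + t • e := by
      rw [hxd, hqdef]; abel
    have hkey : ‖q + t • e‖ ^ 2 = r ^ 2 := by
      rw [← hxp, ← dist_eq_norm, hp]
    rw [norm_add_sq_real, real_inner_smul_right, norm_smul, mul_pow,
      Real.norm_eq_abs, sq_abs, hee] at hkey
    rw [hrt] at hkey
    rw [hAdef, hBdef, hCdef]
    linear_combination hkey
  have hdisc : discrim A B C = (2 * A * t + B) * (2 * A * t + B) := by
    rw [discrim]; linear_combination (-4 * A) * hquad
  have hs2 : discrim A B C = s * s := by
    rw [hsdef, Real.mul_self_sqrt (by rw [hdisc]; exact mul_self_nonneg _)]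
  rcases (quadratic_eq_zero_iff (ne_of_gt hA) hs2 t).mp hquad with h | h
  · left; rw [hxd, hrt, h]
  · right; rw [hxd, hrt, h]
end
end

section
/- Let n₁, n₂, n₃ be unit vectors in ℝ² that are pairwise non-parallel (nᵢ ≠ ±nⱼ for i ≠ j), let c₁, c₂, c₃ ∈ ℝ, and set lᵢ = {y ∈ ℝ² : ⟨y,nᵢ⟩ = cᵢ} and Hᵢ = {y ∈ ℝ² : ⟨y,nᵢ⟩ ≥ cᵢ}, with the three lines pairwise distinct. Then there is at most one pair (x,r) ∈ ℝ² × ℝ with r > 0, x ∈ H₁ ∩ H₂ ∩ H₃ and infDist(x,lᵢ) = r for i = 1,2,3. In other words, at most one circle of positive radius is tangent to three given pairwise non-parallel lines with center on the specified sides of all three lines. -/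
noncomputable section

/-- The distance from a point to a line, when the point is on the `≥ c` side. -/
theorem infDist_line_aux (n x : Plane) (c : ℝ) (hn : ‖n‖ = 1) (hx : c ≤ (inner ℝ x n : ℝ)) :
    Metric.infDist x {y : Plane | (inner ℝ y n : ℝ) = c} = (inner ℝ x n : ℝ) - c := by
  set t : ℝ := (inner ℝ x n : ℝ) - c with ht
  have ht0 : 0 ≤ t := sub_nonneg.mpr hx
  have hp : x - t • n ∈ {y : Plane | (inner ℝ y n : ℝ) = c} := by
    simp only [Set.mem_setOf_eq, inner_sub_left, real_inner_smul_left,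
      real_inner_self_eq_norm_sq, hn]
    rw [ht]; ring
  apply le_antisymm
  · calc Metric.infDist x {y : Plane | (inner ℝ y n : ℝ) = c} ≤ dist x (x - t • n) :=
          Metric.infDist_le_dist_of_mem hp
      _ = t := by
          rw [dist_eq_norm]
          simp [norm_smul, hn, abs_of_nonneg ht0]
  · by_contra hlt
    push_neg at hlt
    rw [Metric.infDist_lt_iff ⟨_, hp⟩] at hlt
    obtain ⟨y, hy, hd⟩ := hlt
    have h1 : (inner ℝ (x - y) n : ℝ) = t := by
      simp only [Set.mem_setOf_eq] at hy
      simp [inner_sub_left, hy, ht]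
    have h2 : t ≤ dist x y := by
      calc t = (inner ℝ (x - y) n : ℝ) := h1.symm
        _ ≤ ‖x - y‖ * ‖n‖ := real_inner_le_norm _ _
        _ = dist x y := by rw [hn, mul_one, dist_eq_norm]
    linarith

/-- Two chords of the unit circle emanating from the same point are not parallel. -/
theorem chords_not_parallel_aux (n₁ n₂ n₃ : Plane) (hn₁ : ‖n₁‖ = 1) (hn₂ : ‖n₂‖ = 1)
    (hn₃ : ‖n₃‖ = 1) (h12 : n₁ ≠ n₂) (h13 : n₁ ≠ n₃) (h23 : n₂ ≠ n₃)
    (k : ℝ) (hk : n₁ - n₃ = k • (n₁ - n₂)) : False := by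
  have hs : (inner ℝ n₁ n₂ : ℝ) ≠ 1 := fun h =>
    h12 ((inner_eq_one_iff_of_norm_eq_one hn₁ hn₂).mp h)
  have hk0 : k ≠ 0 := by
    intro h; rw [h, zero_smul, sub_eq_zero] at hk; exact h13 hk
  have hk1 : k ≠ 1 := by
    intro h; rw [h, one_smul, sub_right_inj] at hk; exact h23 hk.symm
  have h11 : (inner ℝ n₁ n₁ : ℝ) = 1 := by
    rw [real_inner_self_eq_norm_sq, hn₁]; norm_num
  have h22 : (inner ℝ n₂ n₂ : ℝ) = 1 := by
    rw [real_inner_self_eq_norm_sq, hn₂]; norm_num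
  have h33 : (inner ℝ n₃ n₃ : ℝ) = 1 := by
    rw [real_inner_self_eq_norm_sq, hn₃]; norm_num
  set s : ℝ := inner ℝ n₁ n₂ with hsdef
  set p : ℝ := inner ℝ n₁ n₃ with hpdef
  set q : ℝ := inner ℝ n₂ n₃ with hqdef
  have c21 : (inner ℝ n₂ n₁ : ℝ) = s := by rw [hsdef, real_inner_comm]
  have c31 : (inner ℝ n₃ n₁ : ℝ) = p := by rw [hpdef, real_inner_comm]
  have c32 : (inner ℝ n₃ n₂ : ℝ) = q := by rw [hqdef, real_inner_comm]
  have e1 : 1 - p = k * (1 - s) := by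
    have h := congrArg (fun z : Plane => (inner ℝ n₁ z : ℝ)) hk
    simp only [inner_sub_right, real_inner_smul_right] at h
    rw [h11] at h; linarith [h]
  have e2 : s - q = k * (s - 1) := by
    have h := congrArg (fun z : Plane => (inner ℝ n₂ z : ℝ)) hk
    simp only [inner_sub_right, real_inner_smul_right] at h
    rw [h22, c21] at h; linarith [h]
  have e3 : p - 1 = k * (p - q) := by
    have h := congrArg (fun z : Plane => (inner ℝ n₃ z : ℝ)) hk
    simp only [inner_sub_right, real_inner_smul_right] at h
    rw [h33, c31, c32] at h; linarith [h]
  have key : 2 * k * (1 - s) * (1 - k) = 0 := by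
    linear_combination (k - 1) * e1 - k * e2 - e3
  rcases mul_eq_zero.mp key with h | h
  · rcases mul_eq_zero.mp h with h | h
    · rcases mul_eq_zero.mp h with h | h
      · norm_num at h
      · exact hk0 h
    · exact hs (by linarith)
  · exact hk1 (by linarith)

/-- The determinant of the chord directions is nonzero. -/
theorem det_ne_zero_aux (n₁ n₂ n₃ : Plane) (hn₁ : ‖n₁‖ = 1) (hn₂ : ‖n₂‖ = 1)
    (hn₃ : ‖n₃‖ = 1) (h12 : n₁ ≠ n₂) (h13 : n₁ ≠ n₃) (h23 : n₂ ≠ n₃) :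
    (n₁ 0 - n₂ 0) * (n₁ 1 - n₃ 1) - (n₁ 1 - n₂ 1) * (n₁ 0 - n₃ 0) ≠ 0 := by
  intro hD
  by_cases h0 : n₁ 0 - n₂ 0 = 0
  · have h1 : n₁ 1 - n₂ 1 ≠ 0 := by
      intro h1
      apply h12
      ext i
      fin_cases i
      · simpa using sub_eq_zero.mp h0
      · simpa using sub_eq_zero.mp h1
    refine chords_not_parallel_aux n₁ n₂ n₃ hn₁ hn₂ hn₃ h12 h13 h23
      ((n₁ 1 - n₃ 1) / (n₁ 1 - n₂ 1)) ?_
    ext i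
    fin_cases i
    · show n₁ 0 - n₃ 0 = (n₁ 1 - n₃ 1) / (n₁ 1 - n₂ 1) * (n₁ 0 - n₂ 0)
      rw [h0, mul_zero]
      rw [h0] at hD
      field_simp at hD ⊢
      rcases mul_eq_zero.mp (by linear_combination -hD : (n₁ 1 - n₂ 1) * (n₁ 0 - n₃ 0) = 0) with h | h
      · exact absurd h h1
      · linarith
    · show n₁ 1 - n₃ 1 = (n₁ 1 - n₃ 1) / (n₁ 1 - n₂ 1) * (n₁ 1 - n₂ 1)
      field_simp
  · refine chords_not_parallel_aux n₁ n₂ n₃ hn₁ hn₂ hn₃ h12 h13 h23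
      ((n₁ 0 - n₃ 0) / (n₁ 0 - n₂ 0)) ?_
    ext i
    fin_cases i
    · show n₁ 0 - n₃ 0 = (n₁ 0 - n₃ 0) / (n₁ 0 - n₂ 0) * (n₁ 0 - n₂ 0)
      field_simp
    · show n₁ 1 - n₃ 1 = (n₁ 0 - n₃ 0) / (n₁ 0 - n₂ 0) * (n₁ 1 - n₂ 1)
      field_simp
      linear_combination hD

/-- At most one circle of positive radius is tangent to three given pairwise non-parallel,
pairwise distinct lines, with center on the specified sides of all three lines. -/
theorem at_most_one_circle_tangent_three_lines
    (n₁ n₂ n₃ : Plane) (hn₁ : ‖n₁‖ = 1) (hn₂ : ‖n₂‖ = 1) (hn₃ : ‖n₃‖ = 1)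
    (h12 : n₁ ≠ n₂) (h12' : n₁ ≠ -n₂) (h13 : n₁ ≠ n₃) (h13' : n₁ ≠ -n₃)
    (h23 : n₂ ≠ n₃) (h23' : n₂ ≠ -n₃)
    (c₁ c₂ c₃ : ℝ)
    (l₁ l₂ l₃ H₁ H₂ H₃ : Set Plane)
    (hl₁ : l₁ = {y : Plane | (inner ℝ y n₁ : ℝ) = c₁})
    (hl₂ : l₂ = {y : Plane | (inner ℝ y n₂ : ℝ) = c₂})
    (hl₃ : l₃ = {y : Plane | (inner ℝ y n₃ : ℝ) = c₃})
    (hH₁ : H₁ = {y : Plane | c₁ ≤ (inner ℝ y n₁ : ℝ)})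
    (hH₂ : H₂ = {y : Plane | c₂ ≤ (inner ℝ y n₂ : ℝ)})
    (hH₃ : H₃ = {y : Plane | c₃ ≤ (inner ℝ y n₃ : ℝ)})
    (hd12 : l₁ ≠ l₂) (hd13 : l₁ ≠ l₃) (hd23 : l₂ ≠ l₃) :
    ∀ (x : Plane) (r : ℝ) (x' : Plane) (r' : ℝ),
      0 < r → x ∈ H₁ ∩ H₂ ∩ H₃ →
      Metric.infDist x l₁ = r → Metric.infDist x l₂ = r → Metric.infDist x l₃ = r →
      0 < r' → x' ∈ H₁ ∩ H₂ ∩ H₃ →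
      Metric.infDist x' l₁ = r' → Metric.infDist x' l₂ = r' → Metric.infDist x' l₃ = r' →
      x = x' ∧ r = r' := by
  intro x r x' r' hr hxH hx1 hx2 hx3 hr' hxH' hx1' hx2' hx3'
  obtain ⟨⟨hm1, hm2⟩, hm3⟩ := hxH
  obtain ⟨⟨hm1', hm2'⟩, hm3'⟩ := hxH'
  rw [hH₁, Set.mem_setOf_eq] at hm1 hm1'
  rw [hH₂, Set.mem_setOf_eq] at hm2 hm2'
  rw [hH₃, Set.mem_setOf_eq] at hm3 hm3'
  rw [hl₁, infDist_line_aux n₁ x c₁ hn₁ hm1] at hx1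
  rw [hl₂, infDist_line_aux n₂ x c₂ hn₂ hm2] at hx2
  rw [hl₃, infDist_line_aux n₃ x c₃ hn₃ hm3] at hx3
  rw [hl₁, infDist_line_aux n₁ x' c₁ hn₁ hm1'] at hx1'
  rw [hl₂, infDist_line_aux n₂ x' c₂ hn₂ hm2'] at hx2'
  rw [hl₃, infDist_line_aux n₃ x' c₃ hn₃ hm3'] at hx3'
  set v : Plane := x - x' with hv
  have d1 : (inner ℝ v n₁ : ℝ) = r - r' := by rw [hv, inner_sub_left]; linarith
  have d2 : (inner ℝ v n₂ : ℝ) = r - r' := by rw [hv, inner_sub_left]; linarith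
  have d3 : (inner ℝ v n₃ : ℝ) = r - r' := by rw [hv, inner_sub_left]; linarith
  have g1 : v 0 * n₁ 0 + v 1 * n₁ 1 = r - r' := by
    simpa [PiLp.inner_apply, Fin.sum_univ_two, mul_comm] using d1
  have g2 : v 0 * n₂ 0 + v 1 * n₂ 1 = r - r' := by
    simpa [PiLp.inner_apply, Fin.sum_univ_two, mul_comm] using d2
  have g3 : v 0 * n₃ 0 + v 1 * n₃ 1 = r - r' := by
    simpa [PiLp.inner_apply, Fin.sum_univ_two, mul_comm] using d3
  have e12 : v 0 * (n₁ 0 - n₂ 0) + v 1 * (n₁ 1 - n₂ 1) = 0 := by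
    linear_combination g1 - g2
  have e13 : v 0 * (n₁ 0 - n₃ 0) + v 1 * (n₁ 1 - n₃ 1) = 0 := by
    linear_combination g1 - g3
  have hDet := det_ne_zero_aux n₁ n₂ n₃ hn₁ hn₂ hn₃ h12 h13 h23
  have hv0 : v 0 = 0 := by
    have h : v 0 * ((n₁ 0 - n₂ 0) * (n₁ 1 - n₃ 1) - (n₁ 1 - n₂ 1) * (n₁ 0 - n₃ 0)) = 0 := by
      linear_combination (n₁ 1 - n₃ 1) * e12 - (n₁ 1 - n₂ 1) * e13
    exact (mul_eq_zero.mp h).resolve_right hDet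
  have hv1 : v 1 = 0 := by
    have h : v 1 * ((n₁ 0 - n₂ 0) * (n₁ 1 - n₃ 1) - (n₁ 1 - n₂ 1) * (n₁ 0 - n₃ 0)) = 0 := by
      linear_combination (n₁ 0 - n₂ 0) * e13 - (n₁ 0 - n₃ 0) * e12
    exact (mul_eq_zero.mp h).resolve_right hDet
  have hveq : v = 0 := by
    ext i
    fin_cases i
    · simpa using hv0
    · simpa using hv1
  have hxeq : x = x' := sub_eq_zero.mp (hv ▸ hveq)
  refine ⟨hxeq, ?_⟩
  have : (inner ℝ v n₁ : ℝ) = 0 := by rw [hveq]; simp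
  linarith [d1, this]
end
end

section
/- Let S be a finite nonempty subset of ℝ², let l be a line (one-dimensional affine subspace) of ℝ², and let s₁ ∈ ℝ² be a point with s₁ ∉ l and s₁ ∉ S. Then there are at most two points x ∈ ℝ² such that dist(x,s₁) = infDist(x,l) = f_S(x). Equivalently, the curve of the space of circles consisting of the circles passing through s₁ and tangent to l (a parabola) intersects the upper envelope UE(S) in at most two points. -/
/-!
Write `u = x - s₁` for the centre `x` of a circle through `s₁`. Tangency to `l` is the
focus–directrix equation `‖u‖ = β + φ u`, with `φ` a linear form of norm one and `β ≠ 0` the signed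
distance from `s₁` to `l`; a sign change makes `β > 0`. The point `(x, ‖u‖)` lies on `UE(S)` iff
`‖u - d‖ ≤ ‖u‖` for every `d = q - s₁`, `q ∈ S`, with equality for some `d`; note that
`‖u‖² - ‖u - d‖² = 2⟪u, d⟫ - ‖d‖²` is affine in `u` and negative at `u = 0` since `s₁ ∉ S`.

Three centres `u₁, u₂, u₃` in the plane satisfy a dependence `∑ tᵢ uᵢ = 0`, and after a sign change
`tⱼ ≥ 0` for all `j` except possibly one index `m`. Applying `φ` gives `β ∑ tᵢ = ∑ tᵢ ‖uᵢ‖`, which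
is positive by the triangle inequality, strictly because a ray meets the parabola only once. For
the point `d` on the `m`-th circle, `∑ tᵢ (‖uᵢ‖² - ‖uᵢ - d‖²) = -(∑ tᵢ) ‖d‖² < 0`, although the
`m`-th term vanishes and the others are nonnegative.
-/

noncomputable section

open Module Metric
open scoped RealInnerProductSpace

theorem exists_smul_add_smul_add_smul_eq_zero {K V : Type*} [Field K] [AddCommGroup V]
    [Module K V] [FiniteDimensional K V] (hV : finrank K V ≤ 2) (u₁ u₂ u₃ : V) :
    ∃ t₁ t₂ t₃ : K, (t₁ ≠ 0 ∨ t₂ ≠ 0 ∨ t₃ ≠ 0) ∧ t₁ • u₁ + t₂ • u₂ + t₃ • u₃ = 0 := by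
  have hdep : ¬LinearIndependent K ![u₁, u₂, u₃] := fun hli => by
    have := hli.fintype_card_le_finrank
    simp only [Fintype.card_fin] at this
    omega
  obtain ⟨t, ht, i, hi⟩ := Fintype.not_linearIndependent_iff.1 hdep
  refine ⟨t 0, t 1, t 2, ?_, by simpa [Fin.sum_univ_three] using ht⟩
  fin_cases i <;> simp_all

theorem exists_forall_eq_or_eq_of_forall_three {α : Type*} [Nonempty α] {P : α → Prop}
    (h : ∀ x y z, P x → P y → P z → x = y ∨ x = z ∨ y = z) :
    ∃ u w, ∀ x, P x → x = u ∨ x = w := by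
  by_cases hu : ∃ u, P u
  · obtain ⟨u, hu⟩ := hu
    by_cases hw : ∃ w, P w ∧ w ≠ u
    · obtain ⟨w, hw, hwu⟩ := hw
      refine ⟨u, w, fun x hx => (h x u w hx hu hw).imp_right fun h' => ?_⟩
      exact h'.resolve_right (Ne.symm hwu)
    · push Not at hw
      exact ⟨u, u, fun x hx => Or.inl (hw x hx)⟩
  · push Not at hu
    exact ⟨Classical.arbitrary α, Classical.arbitrary α, fun x hx => absurd hx (hu x)⟩

theorem Finset.isGreatest_image_sup' {α ι : Type*} [LinearOrder α] {s : Finset ι}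
    (H : s.Nonempty) (f : ι → α) : IsGreatest (f '' s) (s.sup' H f) := by
  obtain ⟨i, hi, h⟩ := s.exists_mem_eq_sup' H f
  exact ⟨⟨i, hi, h.symm⟩, by rintro _ ⟨j, hj, rfl⟩; exact s.le_sup' f hj⟩

theorem mul_nonneg_or_mul_nonneg_or_mul_nonneg {R : Type*} [CommRing R] [LinearOrder R]
    [IsStrictOrderedRing R] (a b c : R) : 0 ≤ a * b ∨ 0 ≤ a * c ∨ 0 ≤ b * c := by
  by_contra! h
  obtain ⟨hab, hac, hbc⟩ := h
  nlinarith [mul_neg_of_pos_of_neg (mul_pos_of_neg_of_neg hab hac) hbc, sq_nonneg (a * b * c)]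

variable {E : Type*} [NormedAddCommGroup E]

section NormedSpace

variable [NormedSpace ℝ E] {φ : E →ₗ[ℝ] ℝ} {β : ℝ}

theorem eq_of_sameRay_of_norm_eq_add (hβ : β ≠ 0) {u w : E} (hu : ‖u‖ = β + φ u)
    (hw : ‖w‖ = β + φ w) (h : SameRay ℝ u w) : u = w := by
  have hsmul : ‖u‖ • w = ‖w‖ • u := sameRay_iff_norm_smul_eq.mp h
  have hφ : φ u = φ w := by
    have := congrArg φ hsmul
    simp only [map_smul, smul_eq_mul, hu, hw] at this
    exact mul_left_cancel₀ hβ (by linarith)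
  have hu0 : ‖u‖ ≠ 0 := by
    rintro h0
    rw [norm_eq_zero.1 h0, norm_zero, map_zero, add_zero] at hu
    exact hβ hu.symm
  rw [show ‖w‖ = ‖u‖ by rw [hu, hw, hφ]] at hsmul
  exact (smul_right_injective E hu0 hsmul).symm

theorem add_add_pos_of_smul_add_smul_add_smul_eq_zero [StrictConvexSpace ℝ E] (hβ : 0 < β)
    {u₁ u₂ u₃ : E} (hu₁ : ‖u₁‖ = β + φ u₁) (hu₂ : ‖u₂‖ = β + φ u₂) (hu₃ : ‖u₃‖ = β + φ u₃)
    (h₁₃ : u₁ ≠ u₃) (h₂₃ : u₂ ≠ u₃) {t₁ t₂ t₃ : ℝ} (ht₁ : 0 ≤ t₁) (ht₂ : 0 ≤ t₂) (ht₃ : t₃ < 0)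
    (h : t₁ • u₁ + t₂ • u₂ + t₃ • u₃ = 0) : 0 < t₁ + t₂ + t₃ := by
  have hβT : β * (t₁ + t₂ + t₃) = t₁ * ‖u₁‖ + t₂ * ‖u₂‖ + t₃ * ‖u₃‖ := by
    have := congrArg φ h
    simp only [map_add, map_smul, smul_eq_mul, map_zero] at this
    rw [hu₁, hu₂, hu₃]
    linear_combination -this
  have hsum : t₁ • u₁ + t₂ • u₂ = (-t₃) • u₃ := by linear_combination (norm := module) h
  have hnorm : ∀ {t : ℝ} {u : E}, 0 ≤ t → ‖t • u‖ = t * ‖u‖ := fun ht => by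
    rw [norm_smul, Real.norm_of_nonneg ht]
  have htri := norm_add_le (t₁ • u₁) (t₂ • u₂)
  rw [hsum, hnorm ht₁, hnorm ht₂, hnorm (neg_nonneg.2 ht₃.le)] at htri
  refine lt_of_le_of_ne (by nlinarith) fun hT => ?_
  have hray : SameRay ℝ (t₁ • u₁) (t₂ • u₂) := by
    rw [sameRay_iff_norm_add, hsum, hnorm ht₁, hnorm ht₂, hnorm (neg_nonneg.2 ht₃.le)]
    nlinarith
  have eq_zero : ∀ {t : ℝ} {u : E}, 0 ≤ t → ‖u‖ = β + φ u → u ≠ u₃ →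
      SameRay ℝ (t • u) ((-t₃) • u₃) → t = 0 := by
    intro t u ht hu hne hr
    by_contra ht0
    have ht' : 0 < t := lt_of_le_of_ne ht (Ne.symm ht0)
    refine hne (eq_of_sameRay_of_norm_eq_add hβ.ne' hu hu₃ ?_)
    simpa [smul_smul, ht'.ne', ht₃.ne] using
      (hr.pos_smul_left (inv_pos.2 ht')).pos_smul_right (inv_pos.2 (neg_pos.2 ht₃))
  have h₁ : t₁ = 0 := eq_zero ht₁ hu₁ h₁₃ (hsum ▸ (SameRay.refl _).add_right hray)
  have h₂ : t₂ = 0 := eq_zero ht₂ hu₂ h₂₃ (hsum ▸ hray.symm.add_right (SameRay.refl _))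
  linarith

theorem norm_eq_add_of_norm_eq_abs_add (hβ : 0 < β) (hφ : ∀ u, |φ u| ≤ ‖u‖) {u : E}
    (h : ‖u‖ = |β + φ u|) : ‖u‖ = β + φ u := by
  rcases le_or_gt 0 (β + φ u) with h' | h'
  · rwa [abs_of_nonneg h'] at h
  · rw [abs_of_neg h'] at h
    linarith [neg_abs_le (φ u), hφ u]

end NormedSpace

section InnerProductSpace

variable [InnerProductSpace ℝ E] {φ : E →ₗ[ℝ] ℝ} {β : ℝ}

theorem sum_mul_norm_sq_sub_norm_sub_sq {u₁ u₂ u₃ : E} {t₁ t₂ t₃ : ℝ}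
    (h : t₁ • u₁ + t₂ • u₂ + t₃ • u₃ = 0) (d : E) :
    t₁ * (‖u₁‖ ^ 2 - ‖u₁ - d‖ ^ 2) + t₂ * (‖u₂‖ ^ 2 - ‖u₂ - d‖ ^ 2)
      + t₃ * (‖u₃‖ ^ 2 - ‖u₃ - d‖ ^ 2) = -(t₁ + t₂ + t₃) * ‖d‖ ^ 2 := by
  have := congrArg (⟪·, d⟫) h
  simp only [inner_add_left, real_inner_smul_left, inner_zero_left] at this
  rw [norm_sub_sq_real, norm_sub_sq_real, norm_sub_sq_real]
  linear_combination 2 * this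

theorem smul_add_smul_add_smul_ne_zero (hβ : 0 < β)
    {u₁ u₂ u₃ d : E} (hu₁ : ‖u₁‖ = β + φ u₁) (hu₂ : ‖u₂‖ = β + φ u₂) (hu₃ : ‖u₃‖ = β + φ u₃)
    (h₁₃ : u₁ ≠ u₃) (h₂₃ : u₂ ≠ u₃) (hd : d ≠ 0) (hd₁ : ‖u₁ - d‖ ≤ ‖u₁‖)
    (hd₂ : ‖u₂ - d‖ ≤ ‖u₂‖) (hd₃ : ‖u₃ - d‖ = ‖u₃‖) {t₁ t₂ t₃ : ℝ} (ht : 0 ≤ t₁ * t₂)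
    (hne : t₁ ≠ 0 ∨ t₂ ≠ 0 ∨ t₃ ≠ 0) : t₁ • u₁ + t₂ • u₂ + t₃ • u₃ ≠ 0 := by
  wlog hnonneg : 0 ≤ t₁ ∧ 0 ≤ t₂ generalizing t₁ t₂ t₃ with H
  · intro h
    refine H (t₁ := -t₁) (t₂ := -t₂) (t₃ := -t₃) (by linarith) (by simpa using hne) ?_
      (by linear_combination (norm := module) -h)
    rcases mul_nonneg_iff.1 ht with h' | h'
    · exact absurd h' hnonneg
    · exact ⟨neg_nonneg.2 h'.1, neg_nonneg.2 h'.2⟩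
  intro h
  have hT : 0 < t₁ + t₂ + t₃ := by
    rcases lt_or_ge t₃ 0 with ht₃ | ht₃
    · exact add_add_pos_of_smul_add_smul_add_smul_eq_zero hβ hu₁ hu₂ hu₃ h₁₃ h₂₃
        hnonneg.1 hnonneg.2 ht₃ h
    · by_contra! hT
      have : t₁ = 0 ∧ t₂ = 0 ∧ t₃ = 0 := by
        refine ⟨?_, ?_, ?_⟩ <;> linarith [hnonneg.1, hnonneg.2]
      tauto
  have hB := sum_mul_norm_sq_sub_norm_sub_sq h d
  have hsq : ∀ {u : E}, ‖u - d‖ ≤ ‖u‖ → 0 ≤ ‖u‖ ^ 2 - ‖u - d‖ ^ 2 := fun hu =>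
    sub_nonneg.2 (pow_le_pow_left₀ (norm_nonneg _) hu 2)
  rw [hd₃, sub_self, mul_zero, add_zero] at hB
  have hd2 : 0 < ‖d‖ ^ 2 := by positivity
  nlinarith [mul_nonneg hnonneg.1 (hsq hd₁), mul_nonneg hnonneg.2 (hsq hd₂), mul_pos hT hd2]

theorem eq_or_eq_or_eq_of_dist_eq_abs [FiniteDimensional ℝ E] (hE : finrank ℝ E ≤ 2)
    (hφ : ∀ u, |φ u| ≤ ‖u‖) (hβ : β ≠ 0) {s : E} {T : Set E} (hs : s ∉ T) {x₁ x₂ x₃ : E}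
    (hx : ∀ x ∈ ({x₁, x₂, x₃} : Set E),
      dist x s = |β + φ (x - s)| ∧ IsGreatest ((dist x ·) '' T) (dist x s)) :
    x₁ = x₂ ∨ x₁ = x₃ ∨ x₂ = x₃ := by
  wlog hβ_pos : 0 < β generalizing φ β with H
  · refine H (φ := -φ) (β := -β) (by simpa using hφ) (neg_ne_zero.2 hβ) (fun x hx' => ?_)
      (neg_pos.2 (lt_of_le_of_ne (not_lt.1 hβ_pos) hβ))
    rw [LinearMap.neg_apply, ← neg_add, abs_neg]
    exact hx x hx'
  have hpar : ∀ x ∈ ({x₁, x₂, x₃} : Set E), ‖x - s‖ = β + φ (x - s) := fun x hx' =>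
    norm_eq_add_of_norm_eq_abs_add hβ_pos hφ (dist_eq_norm x s ▸ (hx x hx').1)
  by_contra! hne
  obtain ⟨h₁₂, h₁₃, h₂₃⟩ := hne
  have key : ∀ {a b c : E}, a ∈ ({x₁, x₂, x₃} : Set E) → b ∈ ({x₁, x₂, x₃} : Set E) →
      c ∈ ({x₁, x₂, x₃} : Set E) → a ≠ c → b ≠ c → ∀ {ta tb tc : ℝ}, 0 ≤ ta * tb →
      (ta ≠ 0 ∨ tb ≠ 0 ∨ tc ≠ 0) → ta • (a - s) + tb • (b - s) + tc • (c - s) ≠ 0 := by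
    intro a b c ha hb hc hac hbc ta tb tc
    obtain ⟨⟨q, hqT, hq⟩, -⟩ := (hx c hc).2
    have hdist : ∀ y, ‖(y - s) - (q - s)‖ = dist y q := fun y => by
      rw [sub_sub_sub_cancel_right, dist_eq_norm]
    have hup : ∀ {y}, y ∈ ({x₁, x₂, x₃} : Set E) → ‖(y - s) - (q - s)‖ ≤ ‖y - s‖ :=
      fun hy => by rw [hdist, ← dist_eq_norm]; exact (hx _ hy).2.2 ⟨q, hqT, rfl⟩
    exact smul_add_smul_add_smul_ne_zero hβ_pos (hpar a ha) (hpar b hb) (hpar c hc)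
      (sub_left_injective.ne hac) (sub_left_injective.ne hbc)
      (sub_ne_zero.2 (ne_of_mem_of_not_mem hqT hs)) (hup ha) (hup hb)
      (by rw [hdist, ← dist_eq_norm]; exact hq)
  obtain ⟨t₁, t₂, t₃, ht, h⟩ := exists_smul_add_smul_add_smul_eq_zero hE (x₁ - s) (x₂ - s) (x₃ - s)
  rcases mul_nonneg_or_mul_nonneg_or_mul_nonneg t₁ t₂ t₃ with h' | h' | h'
  · exact key (by simp) (by simp) (by simp) h₁₃ h₂₃ h' ht h
  · exact key (a := x₁) (b := x₃) (c := x₂) (by simp) (by simp) (by simp) h₁₂ h₂₃.symm h'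
      (by tauto) (by linear_combination (norm := module) h)
  · exact key (a := x₂) (b := x₃) (c := x₁) (by simp) (by simp) (by simp) h₁₂.symm h₁₃.symm h'
      (by tauto) (by linear_combination (norm := module) h)

theorem exists_forall_eq_or_eq_of_dist_eq_abs [FiniteDimensional ℝ E] (hE : finrank ℝ E ≤ 2)
    (hφ : ∀ u, |φ u| ≤ ‖u‖) (hβ : β ≠ 0) {s : E} {T : Set E} (hs : s ∉ T) :
    ∃ u w : E, ∀ x, dist x s = |β + φ (x - s)| → IsGreatest ((dist x ·) '' T) (dist x s) →
      x = u ∨ x = w := by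
  obtain ⟨u, w, h⟩ := exists_forall_eq_or_eq_of_forall_three
    (P := fun x => dist x s = |β + φ (x - s)| ∧ IsGreatest ((dist x ·) '' T) (dist x s))
    fun x y z hx hy hz => eq_or_eq_or_eq_of_dist_eq_abs hE hφ hβ hs
      (by rintro _ (rfl | rfl | rfl) <;> assumption)
  exact ⟨u, w, fun x h₁ h₂ => h x ⟨h₁, h₂⟩⟩

end InnerProductSpace

namespace Orientation

variable [InnerProductSpace ℝ E] [Fact (finrank ℝ E = 2)] (o : Orientation ℝ E (Fin 2))

theorem norm_sq_mul_dist_add_smul_sq (p v x : E) (t : ℝ) :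
    ‖v‖ ^ 2 * dist x (p + t • v) ^ 2 = ⟪v, x - (p + t • v)⟫ ^ 2 + o.areaForm v (x - p) ^ 2 := by
  have hω : o.areaForm v (x - (p + t • v)) = o.areaForm v (x - p) := by
    rw [← sub_sub, map_sub, map_smul, o.areaForm_apply_self, smul_zero, sub_zero]
  rw [dist_eq_norm, ← hω, o.inner_sq_add_areaForm_sq]

theorem abs_areaForm_div_norm_le_dist {v : E} (hv : v ≠ 0) (p x : E) (t : ℝ) :
    |o.areaForm v (x - p)| / ‖v‖ ≤ dist x (p + t • v) := by
  rw [div_le_iff₀ (norm_pos_iff.2 hv)]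
  refine abs_le_of_sq_le_sq ?_ (by positivity)
  nlinarith [o.norm_sq_mul_dist_add_smul_sq p v x t, sq_nonneg ⟪v, x - (p + t • v)⟫]

theorem dist_foot_eq {v : E} (hv : v ≠ 0) (p x : E) :
    dist x (p + (⟪v, x - p⟫ / ‖v‖ ^ 2) • v) = |o.areaForm v (x - p)| / ‖v‖ := by
  have hv' : 0 < ‖v‖ := norm_pos_iff.2 hv
  have horth : ⟪v, x - (p + (⟪v, x - p⟫ / ‖v‖ ^ 2) • v)⟫ = 0 := by
    rw [← sub_sub, inner_sub_right, real_inner_smul_right, real_inner_self_eq_norm_sq,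
      div_mul_cancel₀ _ (by positivity), sub_self]
  have h := o.norm_sq_mul_dist_add_smul_sq p v x (⟪v, x - p⟫ / ‖v‖ ^ 2)
  rw [horth, zero_pow two_ne_zero, zero_add, ← sq_abs (o.areaForm _ _), ← mul_pow,
    sq_eq_sq₀ (by positivity) (abs_nonneg _)] at h
  rw [eq_div_iff hv'.ne', ← h, mul_comm]

theorem infDist_line_eq {v : E} (hv : v ≠ 0) (p x : E) :
    infDist x {y | ∃ t : ℝ, y = p + t • v} = |o.areaForm v (x - p)| / ‖v‖ := by
  have hne : ({y | ∃ t : ℝ, y = p + t • v} : Set E).Nonempty := ⟨p, 0, by simp⟩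
  refine le_antisymm ?_ ((le_infDist hne).2 ?_)
  · exact o.dist_foot_eq hv p x ▸ infDist_le_dist_of_mem ⟨_, rfl⟩
  · rintro _ ⟨t, rfl⟩
    exact o.abs_areaForm_div_norm_le_dist hv p x t

end Orientation

/-- The parabola of circles passing through a point `s₁` (not on `l`, not in `S`) and tangent
to a line `l` meets the upper envelope `UE(S)` (the graph of `f_S(x) = max_{p ∈ S} dist x p`)
in at most two points: at most two centers `x` satisfy
`dist x s₁ = infDist x l = f_S x`. -/
theorem parabola_meets_upper_envelope_at_most_twice
    (S : Finset Plane) (hS : S.Nonempty)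
    (p v : Plane) (hv : v ≠ 0)
    (l : Set Plane) (hl : l = {y : Plane | ∃ t : ℝ, y = p + t • v})
    (s₁ : Plane) (hs₁l : s₁ ∉ l) (hs₁S : s₁ ∉ S) :
    ∃ u w : Plane, ∀ x : Plane,
      dist x s₁ = S.sup' hS (fun q => dist x q) →
      Metric.infDist x l = S.sup' hS (fun q => dist x q) →
      x = u ∨ x = w := by
  have : Fact (finrank ℝ Plane = 2) := ⟨finrank_euclideanSpace_fin⟩
  let o : Orientation ℝ Plane (Fin 2) := (EuclideanSpace.basisFun (Fin 2) ℝ).toBasis.orientation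
  let φ : Plane →ₗ[ℝ] ℝ := ‖v‖⁻¹ • o.areaForm v
  have hφ : ∀ u, |φ u| ≤ ‖u‖ := fun u => by
    rw [LinearMap.smul_apply, smul_eq_mul, abs_mul, abs_inv, abs_norm,
      inv_mul_le_iff₀ (norm_pos_iff.2 hv)]
    exact o.abs_areaForm_le v u
  have hinf : ∀ x, infDist x l = |‖v‖⁻¹ * o.areaForm v (s₁ - p) + φ (x - s₁)| := fun x => by
    rw [hl, o.infDist_line_eq hv, LinearMap.smul_apply, smul_eq_mul, ← mul_add, ← map_add,
      sub_add_sub_cancel', abs_mul, abs_inv, abs_norm, inv_mul_eq_div]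
  have hβ : ‖v‖⁻¹ * o.areaForm v (s₁ - p) ≠ 0 := fun h0 => hs₁l <| by
    rw [hl]
    refine ⟨⟪v, s₁ - p⟫ / ‖v‖ ^ 2, dist_eq_zero.1 ?_⟩
    rw [o.dist_foot_eq hv, div_eq_inv_mul, ← abs_norm v, ← abs_inv, ← abs_mul, h0,
      abs_zero]
  obtain ⟨u, w, h⟩ := exists_forall_eq_or_eq_of_dist_eq_abs (T := S) (by simp) hφ hβ
    (by exact_mod_cast hs₁S)
  refine ⟨u, w, fun x h₁ h₂ => h x (by rw [h₁, ← h₂, hinf]) ?_⟩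
  rw [h₁]
  exact S.isGreatest_image_sup' hS _
end
end
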